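/- Under the assumptions of Proposition 5.1(a) (|ν(G)| ≤ K N^{-(k'/2 + λ'/4)} for any product G of k' factors ε_j ε_l R⁻_{j,l} of ε-order λ'), the full overlaps satisfy the same bound: for F = Π_{i=1}^k ε_{j_i} ε_{l_i} R_{j_i,l_i} of ε-order λ, |ν(F)| ≤ K/N^{k/2 + λ/4}. The proof expands each R_{j,l} = R⁻_{j,l} + (ε_j ε_l)/N and uses that deleting j factors from the product decreases the ε-order by at most 2j. -/

import Mathlib

/-!
On spin configurations the last site contributes `ε_j ε_l / N` to `R_{j,l}`, so
`ε_j ε_l R_{j,l} = ε_j ε_l R⁻_{j,l} + 1/N`. Expanding the product, `F` is the sum over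
`S ⊆ {1,…,k}` of `N^{-(k - |S|)} G_S`, where `G_S` keeps the truncated factors indexed by `S`.
Each index outside `S` occurs in just two subscripts, so dropping those factors lowers the
ε-order by at most `2(k - |S|)`, and the weight `N^{-(k - |S|)}` more than pays for it:
every term is at most `K N^{-(k/2 + λ/4)}`, and there are `2^k` of them.
-/

/-- The ε-order of the sub-monomial of `Π_{i=1}^k ε_{j_i}ε_{l_i}R_{j_i,l_i}`
indexed by `S`: the number of replica indices occurring an odd number of times
among `{j_i, l_i : i ∈ S}`. -/
def epsOrder {k n : ℕ} (j l : Fin k → Fin n) (S : Finset (Fin k)) : ℕ :=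
  (Finset.univ.filter fun m : Fin n =>
    Odd (∑ i ∈ S, ((if j i = m then 1 else 0) + (if l i = m then 1 else 0)))).card

open Finset

section EpsOrder

variable {k n : ℕ} (j l : Fin k → Fin n)

lemma epsOrder_union_le {S T : Finset (Fin k)} (hST : Disjoint S T) :
    epsOrder j l (S ∪ T) ≤ epsOrder j l S + epsOrder j l T := by
  refine (card_le_card fun m hm => ?_).trans (card_union_le _ _)
  simp only [mem_filter, mem_univ, true_and, mem_union, sum_union hST] at hm ⊢
  by_contra! h
  simp only [Nat.not_odd_iff_even] at h
  exact Nat.not_even_iff_odd.mpr hm (h.1.add h.2)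

lemma epsOrder_le_two_mul_card (S : Finset (Fin k)) : epsOrder j l S ≤ 2 * #S := by
  refine (card_le_card (t := S.image j ∪ S.image l) fun m hm => ?_).trans ?_
  · simp only [mem_filter, mem_univ, true_and] at hm
    obtain ⟨i, hi, hne⟩ := exists_ne_zero_of_sum_ne_zero hm.pos.ne'
    simp only [mem_union, mem_image]
    by_cases hj : j i = m
    · exact Or.inl ⟨i, hi, hj⟩
    · exact Or.inr ⟨i, hi, by simpa [hj] using hne⟩
  · calc #(S.image j ∪ S.image l) ≤ #S + #S :=
          (card_union_le _ _).trans (add_le_add card_image_le card_image_le)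
      _ = 2 * #S := (two_mul _).symm

lemma epsOrder_univ_le (S : Finset (Fin k)) :
    epsOrder j l univ ≤ epsOrder j l S + 2 * (k - #S) := by
  calc epsOrder j l univ = epsOrder j l (S ∪ Sᶜ) := by rw [union_compl]
    _ ≤ epsOrder j l S + epsOrder j l Sᶜ := epsOrder_union_le j l disjoint_compl_right
    _ ≤ epsOrder j l S + 2 * (k - #S) := by
      grw [epsOrder_le_two_mul_card j l Sᶜ, card_compl, Fintype.card_fin]

end EpsOrder

lemma Finset.prod_add_const {ι R : Type*} [CommSemiring R] [DecidableEq ι] (f : ι → R) (c : R)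
    (s : Finset ι) :
    ∏ i ∈ s, (f i + c) = ∑ t ∈ s.powerset, c ^ (#s - #t) * ∏ i ∈ t, f i := by
  rw [prod_add]
  refine sum_congr rfl fun t ht => ?_
  rw [prod_const, card_sdiff_of_subset (mem_powerset.1 ht), mul_comm]

lemma abs_one_div_pow_mul_le {x K y a b : ℝ} (hx : 1 ≤ x) (hK : 0 ≤ K) {k s : ℕ} (hs : s ≤ k)
    (hab : b ≤ a + 2 * (k - s)) (hy : |y| ≤ K * x ^ (-((s : ℝ) / 2 + a / 4))) :
    |(1 / x) ^ (k - s) * y| ≤ K * x ^ (-((k : ℝ) / 2 + b / 4)) := by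
  have hx0 : 0 < x := one_pos.trans_le hx
  have hc : (1 / x) ^ (k - s) = x ^ (-((k - s : ℕ) : ℝ)) := by
    rw [one_div, inv_pow, ← Real.rpow_natCast, ← Real.rpow_neg hx0.le]
  calc |(1 / x) ^ (k - s) * y| ≤ (1 / x) ^ (k - s) * (K * x ^ (-((s : ℝ) / 2 + a / 4))) := by
        rw [abs_mul, abs_of_nonneg (by positivity)]
        exact mul_le_mul_of_nonneg_left hy (by positivity)
    _ = K * x ^ (-((k - s : ℕ) : ℝ) + -((s : ℝ) / 2 + a / 4)) := by
        rw [hc, Real.rpow_add hx0]; ring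
    _ ≤ K * x ^ (-((k : ℝ) / 2 + b / 4)) := by
        refine mul_le_mul_of_nonneg_left (Real.rpow_le_rpow_of_exponent_le hx ?_) hK
        rw [Nat.cast_sub hs]
        linarith

/-- With `M = N` the factors are `ε_j ε_l R_{j,l}`, with `M = N - 1` they are `ε_j ε_l R⁻_{j,l}`,
where `ε_m = σ m (N - 1)`. -/
noncomputable def epsOverlapProd {k n : ℕ} (N M : ℕ) (j l : Fin k → Fin n) (S : Finset (Fin k))
    (σ : Fin n → ℕ → ℝ) : ℝ :=
  ∏ i ∈ S, (σ (j i) (N - 1) * σ (l i) (N - 1) *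
    ((1 / (N : ℝ)) * ∑ i' ∈ range M, σ (j i) i' * σ (l i) i'))

section Expansion

variable {k n N : ℕ} (j l : Fin k → Fin n)

lemma epsOverlapProd_eq_sum (hN : 1 ≤ N) {σ : Fin n → ℕ → ℝ} (hε : ∀ m, σ m (N - 1) ^ 2 = 1) :
    epsOverlapProd N N j l univ σ =
      ∑ S ∈ univ.powerset, (1 / (N : ℝ)) ^ (k - #S) * epsOverlapProd N (N - 1) j l S σ := by
  obtain ⟨M, rfl⟩ : ∃ M, N = M + 1 := ⟨N - 1, by omega⟩
  simp only [epsOverlapProd, Nat.add_sub_cancel] at hε ⊢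
  have hfactor : ∀ i, σ (j i) M * σ (l i) M *
      ((1 / ((M + 1 : ℕ) : ℝ)) * ∑ i' ∈ range (M + 1), σ (j i) i' * σ (l i) i') =
      σ (j i) M * σ (l i) M * ((1 / ((M + 1 : ℕ) : ℝ)) * ∑ i' ∈ range M, σ (j i) i' * σ (l i) i')
        + 1 / ((M + 1 : ℕ) : ℝ) := by
    intro i
    rw [sum_range_succ]
    linear_combination (1 / ((M + 1 : ℕ) : ℝ)) * (σ (l i) M ^ 2 * hε (j i) + hε (l i))
  simp only [hfactor, prod_add_const, card_univ, Fintype.card_fin]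

lemma map_epsOverlapProd_eq_sum (hN : 1 ≤ N) (ν : ((Fin n → ℕ → ℝ) → ℝ) →ₗ[ℝ] ℝ)
    (hν : ∀ f g : (Fin n → ℕ → ℝ) → ℝ,
      (∀ σ : Fin n → ℕ → ℝ, (∀ m i, σ m i = 1 ∨ σ m i = -1) → f σ = g σ) → ν f = ν g) :
    ν (epsOverlapProd N N j l univ) =
      ∑ S ∈ univ.powerset, (1 / (N : ℝ)) ^ (k - #S) * ν (epsOverlapProd N (N - 1) j l S) := by
  have hspin : ∀ σ : Fin n → ℕ → ℝ, (∀ m i, σ m i = 1 ∨ σ m i = -1) →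
      epsOverlapProd N N j l univ σ =
        (∑ S ∈ univ.powerset, (1 / (N : ℝ)) ^ (k - #S) • epsOverlapProd N (N - 1) j l S) σ := by
    intro σ hσ
    rw [Finset.sum_apply]
    refine epsOverlapProd_eq_sum j l hN fun m => ?_
    rcases hσ m (N - 1) with h | h <;> simp [h]
  simp only [hν _ _ hspin, map_sum, map_smul, smul_eq_mul]

end Expansion

/-- Proposition 5.1(b): if `|ν(G)| ≤ K N^{-(k'/2 + λ'/4)}` for every product
`G` of `k'` truncated factors `ε_j ε_l R⁻_{j,l}` of ε-order `λ'`, then the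
full overlaps obey the same bound: for
`F = Π_{i=1}^k ε_{j_i} ε_{l_i} R_{j_i,l_i}` of ε-order `λ`,
`|ν(F)| ≤ C N^{-(k/2 + λ/4)}` with `C` depending only on `k` and `K`.
Configurations are maps `σ : Fin n → ℕ → ℝ` with spins `±1` on the sites
`0,…,N-1`; `ν` is a linear functional determined by the values on spin
configurations; `ε_m = σ_m(N-1)`, `R_{j,l} = N⁻¹ Σ_{i<N} σ_j(i)σ_l(i)` and
`R⁻_{j,l} = N⁻¹ Σ_{i<N-1} σ_j(i)σ_l(i)`. -/
theorem full_overlap_eps_order_moment_bound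
    (k : ℕ) (K : ℝ) (hK : 0 ≤ K) :
    ∃ C : ℝ, ∀ (N : ℕ), 1 ≤ N → ∀ (n : ℕ) (j l : Fin k → Fin n),
      (∀ i, j i ≠ l i) →
      ∀ ν : ((Fin n → ℕ → ℝ) → ℝ) →ₗ[ℝ] ℝ,
      (∀ f g : (Fin n → ℕ → ℝ) → ℝ,
        (∀ σ : Fin n → ℕ → ℝ, (∀ m i, σ m i = 1 ∨ σ m i = -1) → f σ = g σ) →
        ν f = ν g) →
      (∀ S : Finset (Fin k),
        |ν (fun σ => ∏ i ∈ S,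
            (σ (j i) (N - 1) * σ (l i) (N - 1) *
              ((1 / (N : ℝ)) * ∑ i' ∈ Finset.range (N - 1), σ (j i) i' * σ (l i) i')))|
          ≤ K * (N : ℝ) ^ (-((S.card : ℝ) / 2 + (epsOrder j l S : ℝ) / 4))) →
      |ν (fun σ => ∏ i : Fin k,
          (σ (j i) (N - 1) * σ (l i) (N - 1) *
            ((1 / (N : ℝ)) * ∑ i' ∈ Finset.range N, σ (j i) i' * σ (l i) i')))|
        ≤ C * (N : ℝ) ^ (-((k : ℝ) / 2 + (epsOrder j l Finset.univ : ℝ) / 4)) := by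
  refine ⟨2 ^ k * K, fun N hN n j l _ ν hν hG => ?_⟩
  set bound : ℝ := K * (N : ℝ) ^ (-((k : ℝ) / 2 + (epsOrder j l univ : ℝ) / 4))
  have hterm : ∀ S : Finset (Fin k),
      |(1 / (N : ℝ)) ^ (k - #S) * ν (epsOverlapProd N (N - 1) j l S)| ≤ bound := by
    intro S
    have hS : #S ≤ k := by simpa using card_le_univ S
    refine abs_one_div_pow_mul_le (by exact_mod_cast hN) hK hS ?_ (hG S)
    rw [← Nat.cast_sub hS]
    exact_mod_cast epsOrder_univ_le j l S
  calc |ν (epsOverlapProd N N j l univ)|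
      = |∑ S ∈ univ.powerset, (1 / (N : ℝ)) ^ (k - #S) * ν (epsOverlapProd N (N - 1) j l S)| := by
        rw [map_epsOverlapProd_eq_sum j l hN ν hν]
    _ ≤ ∑ S ∈ univ.powerset, |(1 / (N : ℝ)) ^ (k - #S) * ν (epsOverlapProd N (N - 1) j l S)| :=
        abs_sum_le_sum_abs _ _
    _ ≤ ∑ _S ∈ (univ : Finset (Fin k)).powerset, bound := sum_le_sum fun S _ => hterm S
    _ = 2 ^ k * bound := by
        rw [sum_const, card_powerset, card_univ, Fintype.card_fin, nsmul_eq_mul, Nat.cast_pow,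
          Nat.cast_ofNat]
    _ = _ := (mul_assoc _ _ _).symm
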